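/- Define J₁, J₂ : ℝ³ → ℂ³ by: J₁(y) = (1,0,0)ᵀ if y₁ ∈ (−1,1), y₂ ∈ (−2,−1] ∪ [1,2), y₃ ∈ (−1,1); J₁(y) = (y₁,0,0)ᵀ if y ∈ (−1,1)³; J₁(y) = 0 otherwise; and J₂(y) = (1,0,0)ᵀ if y₁ ∈ (−1,1), y₂ ∈ (−2,−1] ∪ [1,2), y₃ ∈ (−1,1); J₂(y) = 0 otherwise. Let x̂₀ = (0,1,0)ᵀ. Then for every wavenumber k > 0, E^∞(x̂₀, k; J₁) = E^∞(x̂₀, k; J₂); in particular e · E^∞(x̂₀, k; J₁) = e · E^∞(x̂₀, k; J₂) for every unit vector e with e·x̂₀ = 0, even though J₁ ≠ J₂. -/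

import Mathlib

open MeasureTheory Complex

noncomputable section

abbrev R3 := EuclideanSpace ℝ (Fin 3)
abbrev C3 := EuclideanSpace ℂ (Fin 3)

/-- The complex component of a ℂ³-vector in a real direction `e`. -/
def dotC (e : R3) (w : C3) : ℂ := ∑ i, (e i : ℂ) * w i

/-- The complexification of a real vector. -/
def cplx (x : R3) : C3 := (WithLp.equiv 2 (Fin 3 → ℂ)).symm fun i => (x i : ℂ)

/-- The electric far field pattern `E^∞(x̂, k; J) = iωμ (v − (x̂·v) x̂)`,
where `ω = k/√(εμ)` and `v = ∫ exp(−ik x̂·y) J(y) dy`. -/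
def farField (ε μ k : ℝ) (J : R3 → C3) (x : R3) : C3 :=
  (Complex.I * ((k / Real.sqrt (ε * μ) : ℝ) : ℂ) * (μ : ℂ)) •
    ((∫ y, Complex.exp (-Complex.I * (k : ℂ) * ((inner ℝ x y : ℝ) : ℂ)) • J y) -
      (dotC x (∫ y, Complex.exp (-Complex.I * (k : ℂ) * ((inner ℝ x y : ℝ) : ℂ)) • J y)) • cplx x)

open scoped Classical in
/-- The source `J₁` of the counterexample. -/
def Jone : R3 → C3 := fun y =>
  if y 0 ∈ Set.Ioo (-1 : ℝ) 1 ∧ (y 1 ∈ Set.Ioc (-2 : ℝ) (-1) ∨ y 1 ∈ Set.Ico (1 : ℝ) 2) ∧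
      y 2 ∈ Set.Ioo (-1 : ℝ) 1 then
    cplx (EuclideanSpace.single 0 1)
  else if y 0 ∈ Set.Ioo (-1 : ℝ) 1 ∧ y 1 ∈ Set.Ioo (-1 : ℝ) 1 ∧ y 2 ∈ Set.Ioo (-1 : ℝ) 1 then
    ((y 0 : ℂ)) • cplx (EuclideanSpace.single 0 1)
  else 0

open scoped Classical in
/-- The source `J₂` of the counterexample. -/
def Jtwo : R3 → C3 := fun y =>
  if y 0 ∈ Set.Ioo (-1 : ℝ) 1 ∧ (y 1 ∈ Set.Ioc (-2 : ℝ) (-1) ∨ y 1 ∈ Set.Ico (1 : ℝ) 2) ∧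
      y 2 ∈ Set.Ioo (-1 : ℝ) 1 then
    cplx (EuclideanSpace.single 0 1)
  else 0

/-! On the cube `(-1,1)³` the source `J₁ - J₂` is `y₁ e₁`, and it vanishes elsewhere because the
slabs of `J₂` avoid the cube. At `x̂₀ = e₂` the far field sees `J` only through
`v = ∫ exp(-ik y₂) J(y) dy`; for `J₁ - J₂` the integrand is a product of functions of the single
coordinates, so by Fubini `v(J₁ - J₂) = (∫₋₁¹ t dt) (∫₋₁¹ e^{-ikt} dt) (∫₋₁¹ dt) e₁ = 0`, the first
factor vanishing because `t` is odd. -/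

open Set

section EuclideanFubini

variable {𝕜 ι : Type*} [RCLike 𝕜] [Fintype ι]

theorem EuclideanSpace.integrable_fintype_prod {f : ι → ℝ → 𝕜} (hf : ∀ i, Integrable (f i)) :
    Integrable fun y : EuclideanSpace ℝ ι => ∏ i, f i (y i) :=
  (EuclideanSpace.volume_preserving_symm_measurableEquiv_toLp ι).integrable_comp_emb
    (MeasurableEquiv.measurableEmbedding _) |>.mpr (Integrable.fintype_prod hf)

theorem EuclideanSpace.integral_fintype_prod_eq_prod (f : ι → ℝ → 𝕜) :
    ∫ y : EuclideanSpace ℝ ι, ∏ i, f i (y i) = ∏ i, ∫ t, f i t :=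
  ((EuclideanSpace.volume_preserving_symm_measurableEquiv_toLp ι).integral_comp' _).trans
    (integral_fintype_prod_volume_eq_prod _)

end EuclideanFubini

theorem Continuous.integrable_indicator_Ioo {E : Type*} [NormedAddCommGroup E] {f : ℝ → E}
    (hf : Continuous f) (a b : ℝ) : Integrable ((Ioo a b).indicator f) :=
  (hf.integrableOn_Icc.mono_set Ioo_subset_Icc_self).integrable_indicator measurableSet_Ioo

theorem integral_indicator_Ioo_neg_ofReal (a : ℝ) :
    ∫ t, (Ioo (-a) a).indicator (fun t : ℝ => (t : ℂ)) t = 0 := by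
  rw [integral_indicator measurableSet_Ioo, ← integral_Ioc_eq_integral_Ioo]
  rcases le_total (-a) a with h | h
  · rw [← intervalIntegral.integral_of_le h, intervalIntegral.integral_ofReal, integral_id]
    simp
  · simp [Ioc_eq_empty_of_le h]

theorem integral_add_eq_left_of_integral_eq_zero {α G : Type*} [MeasurableSpace α]
    [NormedAddCommGroup G] [NormedSpace ℝ G] {μ : Measure α} {f g : α → G}
    (hg : Integrable g μ) (hg₀ : ∫ x, g x ∂μ = 0) : ∫ x, f x + g x ∂μ = ∫ x, f x ∂μ := by
  by_cases hf : Integrable f μ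
  · rw [integral_add hf hg, hg₀, add_zero]
  · rw [integral_undef hf, integral_undef (mt (integrable_add_iff_integrable_left' hg).1 hf)]

def cubeFactor (k : ℝ) : Fin 3 → ℝ → ℂ := ![fun t => t, fun t => exp (-I * k * t), 1]

theorem continuous_cubeFactor (k : ℝ) (i : Fin 3) : Continuous (cubeFactor k i) := by
  fin_cases i <;> simp [cubeFactor] <;> fun_prop

theorem prod_indicator_cubeFactor (k : ℝ) (y : R3) :
    ∏ i, (Ioo (-1 : ℝ) 1).indicator (cubeFactor k i) (y i) =
      if y 0 ∈ Ioo (-1 : ℝ) 1 ∧ y 1 ∈ Ioo (-1 : ℝ) 1 ∧ y 2 ∈ Ioo (-1 : ℝ) 1 then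
        exp (-I * k * (y 1 : ℂ)) * y 0
      else 0 := by
  simp only [Fin.prod_univ_three, indicator_apply]
  split_ifs <;> simp_all [cubeFactor, mul_comm]

theorem exp_smul_Jone (k : ℝ) (y : R3) :
    exp (-I * k * (y 1 : ℂ)) • Jone y = exp (-I * k * (y 1 : ℂ)) • Jtwo y +
      (∏ i, (Ioo (-1 : ℝ) 1).indicator (cubeFactor k i) (y i)) •
        cplx (EuclideanSpace.single 0 1) := by
  rw [prod_indicator_cubeFactor]
  by_cases hslab : y 0 ∈ Ioo (-1 : ℝ) 1 ∧ (y 1 ∈ Ioc (-2 : ℝ) (-1) ∨ y 1 ∈ Ico (1 : ℝ) 2) ∧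
      y 2 ∈ Ioo (-1 : ℝ) 1
  · have hy₁ : y 1 ∉ Ioo (-1 : ℝ) 1 := by
      rintro ⟨h₁, h₂⟩
      rcases hslab.2.1 with ⟨-, h⟩ | ⟨h, -⟩ <;> linarith
    simp [Jone, Jtwo, hslab, hy₁]
  · by_cases hcube : y 0 ∈ Ioo (-1 : ℝ) 1 ∧ y 1 ∈ Ioo (-1 : ℝ) 1 ∧ y 2 ∈ Ioo (-1 : ℝ) 1
    · simp only [Jone, Jtwo, if_neg hslab, if_pos hcube, smul_zero, zero_add, smul_smul]
    · simp only [Jone, Jtwo, if_neg hslab, if_neg hcube, smul_zero, zero_smul, add_zero]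

theorem integral_prod_indicator_cubeFactor (k : ℝ) :
    ∫ y : R3, ∏ i, (Ioo (-1 : ℝ) 1).indicator (cubeFactor k i) (y i) = 0 := by
  rw [EuclideanSpace.integral_fintype_prod_eq_prod, Fin.prod_univ_three]
  simp [cubeFactor, integral_indicator_Ioo_neg_ofReal]

theorem integral_exp_smul_Jone (k : ℝ) :
    ∫ y, exp (-I * k * ((inner ℝ (EuclideanSpace.single 1 1 : R3) y : ℝ) : ℂ)) • Jone y =
      ∫ y, exp (-I * k * ((inner ℝ (EuclideanSpace.single 1 1 : R3) y : ℝ) : ℂ)) • Jtwo y := by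
  simp only [EuclideanSpace.inner_single_left, map_one, one_mul, exp_smul_Jone]
  refine integral_add_eq_left_of_integral_eq_zero
    ((EuclideanSpace.integrable_fintype_prod fun i =>
      (continuous_cubeFactor k i).integrable_indicator_Ioo _ _).smul_const _) ?_
  rw [integral_smul_const, integral_prod_indicator_cubeFactor, zero_smul]

theorem farField_congr {ε μ k : ℝ} {J₁ J₂ : R3 → C3} {x : R3}
    (h : ∫ y, exp (-I * k * ((inner ℝ x y : ℝ) : ℂ)) • J₁ y =
      ∫ y, exp (-I * k * ((inner ℝ x y : ℝ) : ℂ)) • J₂ y) :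
    farField ε μ k J₁ x = farField ε μ k J₂ x := by
  rw [farField, h, farField]

theorem Jone_ne_Jtwo : Jone ≠ Jtwo := by
  intro h
  have := congrArg (· 0) (congrFun h (EuclideanSpace.single 0 (1 / 2)))
  simp [Jone, Jtwo, cplx] at this
  norm_num at this

theorem farField_counterexample_general (ε μ : ℝ) :
    (∀ k : ℝ, 0 < k →
      farField ε μ k Jone (EuclideanSpace.single 1 1) =
        farField ε μ k Jtwo (EuclideanSpace.single 1 1) ∧
      ∀ e : R3, ‖e‖ = 1 → (inner ℝ e (EuclideanSpace.single 1 1 : R3) : ℝ) = 0 →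
        dotC e (farField ε μ k Jone (EuclideanSpace.single 1 1)) =
          dotC e (farField ε μ k Jtwo (EuclideanSpace.single 1 1))) ∧
    Jone ≠ Jtwo := by
  refine ⟨fun k _ => ?_, Jone_ne_Jtwo⟩
  have hfar := farField_congr (ε := ε) (μ := μ) (integral_exp_smul_Jone k)
  exact ⟨hfar, fun e _ _ => by rw [hfar]⟩

/-- Two different sources whose far field patterns at the observation direction
`x̂₀ = (0,1,0)ᵀ` coincide for all wavenumbers. -/
theorem farField_counterexample (ε μ : ℝ) (hε : 0 < ε) (hμ : 0 < μ) :
    (∀ k : ℝ, 0 < k →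
      farField ε μ k Jone (EuclideanSpace.single 1 1) =
        farField ε μ k Jtwo (EuclideanSpace.single 1 1) ∧
      ∀ e : R3, ‖e‖ = 1 → (inner ℝ e (EuclideanSpace.single 1 1 : R3) : ℝ) = 0 →
        dotC e (farField ε μ k Jone (EuclideanSpace.single 1 1)) =
          dotC e (farField ε μ k Jtwo (EuclideanSpace.single 1 1))) ∧
    Jone ≠ Jtwo :=
  farField_counterexample_general ε μ
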